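/- arXiv:2208.14817 — 8 statements merged into one kernel-verified Lean document; each statement's English description precedes it below -/
import Mathlib

section
/- Tsarev's identity: let v^1,...,v^n be smooth functions of coordinates u^1,...,u^n with pairwise distinct values, and set Γ^i_{ij} = (∂_j v^i)/(v^j − v^i) for i ≠ j. Then for pairwise distinct indices i, j, k: ∂_i Γ^k_{kj} + Γ^k_{ki}Γ^k_{kj} − Γ^k_{kj}Γ^j_{ji} − Γ^k_{ki}Γ^i_{ij} = ((v^i − v^k)/(v^j − v^i)) · (∂_j((∂_i v^k)/(v^i − v^k)) − ∂_i((∂_j v^k)/(v^j − v^k))). -/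
/-- Partial derivative of `f` with respect to the `i`-th coordinate at `x`. -/
noncomputable def pd {n : ℕ} (i : Fin n) (f : (Fin n → ℝ) → ℝ) (x : Fin n → ℝ) : ℝ :=
  deriv (fun t => f (Function.update x i t)) (x i)

lemma pd_hasDerivAt {n : ℕ} (i : Fin n) {f : (Fin n → ℝ) → ℝ} {x : Fin n → ℝ}
    (hf : DifferentiableAt ℝ f x) :
    HasDerivAt (fun t => f (Function.update x i t))
      (fderiv ℝ f x (Pi.single i 1)) (x i) := by
  have h2 : HasFDerivAt f (fderiv ℝ f x) (Function.update x i (x i)) := by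
    rw [Function.update_eq_self]; exact hf.hasFDerivAt
  exact h2.comp_hasDerivAt (x i) (hasDerivAt_update x i (x i))

lemma pd_eq_fderiv {n : ℕ} (i : Fin n) {f : (Fin n → ℝ) → ℝ} {x : Fin n → ℝ}
    (hf : DifferentiableAt ℝ f x) :
    pd i f x = fderiv ℝ f x (Pi.single i 1) := (pd_hasDerivAt i hf).deriv

lemma pd_eq_fderiv_fun {n : ℕ} (i : Fin n) {f : (Fin n → ℝ) → ℝ}
    (hf : ContDiff ℝ (⊤ : ℕ∞) f) :
    pd i f = fun y => fderiv ℝ f y (Pi.single i 1) :=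
  funext fun y => pd_eq_fderiv i (hf.differentiable (by simp) y)

lemma contDiff_pd {n : ℕ} (i : Fin n) {f : (Fin n → ℝ) → ℝ}
    (hf : ContDiff ℝ (⊤ : ℕ∞) f) : ContDiff ℝ (⊤ : ℕ∞) (pd i f) := by
  rw [pd_eq_fderiv_fun i hf]
  exact (hf.fderiv_right (by simp)).clm_apply contDiff_const

lemma pd_comm {n : ℕ} (i j : Fin n) {f : (Fin n → ℝ) → ℝ}
    (hf : ContDiff ℝ (⊤ : ℕ∞) f) (x : Fin n → ℝ) :
    pd i (pd j f) x = pd j (pd i f) x := by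
  have hd : Differentiable ℝ f := hf.differentiable (by simp)
  have hfd : Differentiable ℝ (fderiv ℝ f) :=
    (hf.fderiv_right (m := (⊤ : ℕ∞)) (by simp)).differentiable (by simp)
  have key : ∀ a b : Fin n,
      pd a (pd b f) x
        = fderiv ℝ (fderiv ℝ f) x (Pi.single a 1) (Pi.single b 1) := by
    intro a b
    rw [pd_eq_fderiv_fun b hf]
    rw [pd_eq_fderiv a (((hf.fderiv_right (m := (⊤ : ℕ∞)) (by simp)).clm_apply
      (contDiff_const (c := Pi.single b (1:ℝ)))).differentiable (by simp) x)]
    rw [fderiv_clm_apply (hfd x) (differentiableAt_const _)]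
    simp
  rw [key i j, key j i]
  exact second_derivative_symmetric (fun y => (hd y).hasFDerivAt)
    (hfd x).hasFDerivAt _ _

lemma pd_sub {n : ℕ} (i : Fin n) {f g : (Fin n → ℝ) → ℝ} {x : Fin n → ℝ}
    (hf : DifferentiableAt ℝ f x) (hg : DifferentiableAt ℝ g x) :
    pd i (fun y => f y - g y) x = pd i f x - pd i g x := by
  rw [pd_eq_fderiv i hf, pd_eq_fderiv i hg]
  exact ((pd_hasDerivAt i hf).sub (pd_hasDerivAt i hg)).deriv

lemma pd_div {n : ℕ} (i : Fin n) {f g : (Fin n → ℝ) → ℝ} {x : Fin n → ℝ}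
    (hf : DifferentiableAt ℝ f x) (hg : DifferentiableAt ℝ g x) (hgx : g x ≠ 0) :
    pd i (fun y => f y / g y) x
      = (pd i f x * g x - f x * pd i g x) / (g x) ^ 2 := by
  have h := (pd_hasDerivAt i hf).div (pd_hasDerivAt i hg)
      (by rw [Function.update_eq_self]; exact hgx)
  rw [pd_eq_fderiv i hf, pd_eq_fderiv i hg]
  have h2 := h.deriv
  simp only [Function.update_eq_self] at h2
  exact h2

/-- **Tsarev's identity.** For smooth pairwise-distinct characteristic
velocities `v^i` and `Γ^i_{ij} = ∂_j v^i / (v^j − v^i)` (here `Γ i j` stands for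
`Γ^i_{ij}`), for pairwise distinct `i, j, k`:
`∂_i Γ^k_{kj} + Γ^k_{ki}Γ^k_{kj} − Γ^k_{kj}Γ^j_{ji} − Γ^k_{ki}Γ^i_{ij}
  = ((v^i − v^k)/(v^j − v^i)) (∂_j(∂_i v^k/(v^i − v^k)) − ∂_i(∂_j v^k/(v^j − v^k)))`. -/
theorem statement2 {n : ℕ}
    (v : Fin n → (Fin n → ℝ) → ℝ)
    (hv : ∀ i, ContDiff ℝ (⊤ : ℕ∞) (v i))
    (hdist : ∀ i j : Fin n, i ≠ j → ∀ x, v i x ≠ v j x)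
    (Γ : Fin n → Fin n → (Fin n → ℝ) → ℝ)
    (hΓ : ∀ i j : Fin n, i ≠ j → ∀ x, Γ i j x = pd j (v i) x / (v j x - v i x)) :
    ∀ i j k : Fin n, i ≠ j → j ≠ k → i ≠ k → ∀ x,
      pd i (Γ k j) x + Γ k i x * Γ k j x - Γ k j x * Γ j i x - Γ k i x * Γ i j x
        = ((v i x - v k x) / (v j x - v i x)) *
            (pd j (fun y => pd i (v k) y / (v i y - v k y)) x
              - pd i (fun y => pd j (v k) y / (v j y - v k y)) x) := by
  intro i j k hij hjk hik x
  have hAB : v i x - v j x ≠ 0 := sub_ne_zero.mpr (hdist i j hij x)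
  have hBA : v j x - v i x ≠ 0 := sub_ne_zero.mpr (hdist j i (Ne.symm hij) x)
  have hAC : v i x - v k x ≠ 0 := sub_ne_zero.mpr (hdist i k hik x)
  have hBC : v j x - v k x ≠ 0 := sub_ne_zero.mpr (hdist j k hjk x)
  have dvi : ∀ (m : Fin n) y, DifferentiableAt ℝ (v m) y :=
    fun m y => (hv m).differentiable (by simp) y
  have dpd : ∀ (a m : Fin n) y, DifferentiableAt ℝ (pd a (v m)) y :=
    fun a m y => (contDiff_pd a (hv m)).differentiable (by simp) y
  have eΓkj : Γ k j = fun y => pd j (v k) y / (v j y - v k y) :=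
    funext fun y => hΓ k j (Ne.symm hjk) y
  have eΓki : Γ k i = fun y => pd i (v k) y / (v i y - v k y) :=
    funext fun y => hΓ k i (Ne.symm hik) y
  have eΓji : Γ j i = fun y => pd i (v j) y / (v i y - v j y) :=
    funext fun y => hΓ j i (Ne.symm hij) y
  have eΓij : Γ i j = fun y => pd j (v i) y / (v j y - v i y) :=
    funext fun y => hΓ i j hij y
  have e1 : pd i (fun y => pd j (v k) y / (v j y - v k y)) x
      = (pd i (pd j (v k)) x * (v j x - v k x)
          - pd j (v k) x * (pd i (v j) x - pd i (v k) x)) / (v j x - v k x) ^ 2 := by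
    rw [pd_div i (g := fun y => v j y - v k y) (dpd j k x) ((dvi j x).sub (dvi k x)) hBC,
      pd_sub i (dvi j x) (dvi k x)]
  have e2 : pd j (fun y => pd i (v k) y / (v i y - v k y)) x
      = (pd i (pd j (v k)) x * (v i x - v k x)
          - pd i (v k) x * (pd j (v i) x - pd j (v k) x)) / (v i x - v k x) ^ 2 := by
    rw [pd_div j (g := fun y => v i y - v k y) (dpd i k x) ((dvi i x).sub (dvi k x)) hAC,
      pd_sub j (dvi i x) (dvi k x), pd_comm j i (hv k) x]
  simp only [eΓkj, eΓki, eΓji, eΓij]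
  rw [e1, e2]
  field_simp
  ring
end

section
/- Let Γ^k_{ij} (i,j,k ∈ {1,...,n}) be functions of u^1,...,u^n satisfying: Γ^k_{ij} = 0 whenever i = 1 or j = 1; Γ^k_{ij} = Γ^{k+4-i-j}_{22} whenever k − i − j ≥ −2 and i,j ≥ 2; Γ^k_{ij} = 0 if k − i − j < −2; Γ^2_{22} = −ε/u^2; and Γ^{m+1}_{22} = −(1/u^2) Σ_{s=1}^{m-1} u^{2+s} Γ^{m+1-s}_{22} for m ≥ 2. Then for every i,j ∈ {1,...,n}: Σ_{k=1}^n Γ^i_{jk} u^k = −ε·δ^i_j·(1 − δ^j_1), i.e. the sum is 0 if i ≠ j or j = 1, and equals −ε if i = j ≠ 1. -/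
/-!
Put `c m = Γ^{m+2}_{22}`. The recursion for the `Γ^{m+1}_{22}` says exactly that the Cauchy
product of `(u^{2+s})_s` with `(c m)_m` is the constant sequence `(-ε, 0, 0, …)`, i.e. the power
series `Σ c_m x^m` is `-ε` times the inverse of `Σ u^{2+s} x^s`. On the other hand, by the
shape of the Christoffel symbols, the contraction `Σ_k Γ^{j+t}_{jk} u^k` for `j ≥ 2` is the
`t`-th coefficient of that product, while it vanishes term by term when `j = 1` or `i < j`.
-/

open Finset

lemma sum_range_mul_sub_eq_zero {K : Type*} [Field K] {a c : ℕ → K} {m : ℕ} (ha : a 0 ≠ 0)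
    (h : c m = -(1 / a 0) * ∑ s ∈ Icc 1 m, a s * c (m - s)) :
    ∑ s ∈ range (m + 1), a s * c (m - s) = 0 := by
  rw [range_eq_Ico, sum_eq_sum_Ico_succ_bot (by omega : 0 < m + 1), zero_add, Ico_add_one_right_eq_Icc,
    Nat.sub_zero, h]
  field_simp
  ring

section Christoffel

variable {Γ : ℕ → ℕ → ℕ → ℝ}

lemma christoffel_eq_zero (h1 : ∀ k i j : ℕ, i = 1 ∨ j = 1 → Γ k i j = 0)
    (h3 : ∀ k i j : ℕ, (k : ℤ) - (i : ℤ) - (j : ℤ) < -2 → Γ k i j = 0) {i j k : ℕ}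
    (h : j = 1 ∨ k = 1 ∨ i + 2 < j + k) : Γ i j k = 0 := by
  rcases h with h | h | h
  · exact h1 i j k (.inl h)
  · exact h1 i j k (.inr h)
  · exact h3 i j k (by omega)

lemma sum_christoffel_mul_eq_sum_range {n j t : ℕ} (u : ℕ → ℝ) (hj : 2 ≤ j) (hn : j + t ≤ n)
    (h1 : ∀ k i j : ℕ, i = 1 ∨ j = 1 → Γ k i j = 0)
    (h2 : ∀ k i j : ℕ, 2 ≤ i → 2 ≤ j → (-2 : ℤ) ≤ (k : ℤ) - (i : ℤ) - (j : ℤ) →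
      Γ k i j = Γ (k + 4 - i - j) 2 2)
    (h3 : ∀ k i j : ℕ, (k : ℤ) - (i : ℤ) - (j : ℤ) < -2 → Γ k i j = 0) :
    ∑ k ∈ Icc 1 n, Γ (j + t) j k * u k = ∑ s ∈ range (t + 1), u (2 + s) * Γ (t - s + 2) 2 2 := by
  have hsub : Icc 2 (t + 2) ⊆ Icc 1 n := Icc_subset_Icc (by omega) (by omega)
  rw [← sum_subset hsub fun k hk hk' => by
    simp only [mem_Icc] at hk hk'
    rw [christoffel_eq_zero h1 h3 (by omega), zero_mul]]
  rw [← Ico_add_one_right_eq_Icc, sum_Ico_eq_sum_range, show t + 2 + 1 - 2 = t + 1 by omega]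
  refine sum_congr rfl fun s hs => ?_
  rw [mem_range] at hs
  rw [h2 _ _ _ (by omega) (by omega) (by omega), mul_comm]
  congr 2
  omega

lemma sum_range_mul_christoffel (ε : ℝ) (u : ℕ → ℝ) (hu : u 2 ≠ 0)
    (h4 : Γ 2 2 2 = -ε / u 2)
    (h5 : ∀ m : ℕ, 2 ≤ m →
      Γ (m + 1) 2 2 = -(1 / u 2) * ∑ s ∈ Icc 1 (m - 1), u (2 + s) * Γ (m + 1 - s) 2 2)
    (m : ℕ) :
    ∑ s ∈ range (m + 1), u (2 + s) * Γ (m - s + 2) 2 2 = if m = 0 then -ε else 0 := by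
  rcases m with _ | t
  · simp [h4, mul_div_cancel₀ _ hu]
  · rw [if_neg t.succ_ne_zero]
    refine sum_range_mul_sub_eq_zero (a := fun s => u (2 + s)) (c := fun m => Γ (m + 2) 2 2) hu ?_
    rw [h5 (t + 2) (by omega)]
    refine congrArg _ (sum_congr rfl fun s hs => ?_)
    rw [mem_Icc] at hs
    congr 2
    omega

end Christoffel

/-- **Lemma 7.2.** For the Christoffel symbols of the single `n×n`
Jordan block Lauricella connection (indices written 1-based, `Γ k i j` = `Γ^k_{ij}`),
the Euler-field contraction identity
`Σ_{k=1}^n Γ^i_{jk} u^k = −ε δ^i_j (1 − δ^j_1)` holds. -/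
theorem statement3 (n : ℕ) (ε : ℝ) (u : ℕ → ℝ) (hu : u 2 ≠ 0)
    (Γ : ℕ → ℕ → ℕ → ℝ)
    (h1 : ∀ k i j : ℕ, i = 1 ∨ j = 1 → Γ k i j = 0)
    (h2 : ∀ k i j : ℕ, 2 ≤ i → 2 ≤ j → (-2 : ℤ) ≤ (k : ℤ) - (i : ℤ) - (j : ℤ) →
      Γ k i j = Γ (k + 4 - i - j) 2 2)
    (h3 : ∀ k i j : ℕ, (k : ℤ) - (i : ℤ) - (j : ℤ) < -2 → Γ k i j = 0)
    (h4 : Γ 2 2 2 = -ε / u 2)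
    (h5 : ∀ m : ℕ, 2 ≤ m →
      Γ (m + 1) 2 2 = -(1 / u 2) * ∑ s ∈ Finset.Icc 1 (m - 1), u (2 + s) * Γ (m + 1 - s) 2 2) :
    ∀ i j : ℕ, 1 ≤ i → i ≤ n → 1 ≤ j → j ≤ n →
      ∑ k ∈ Finset.Icc 1 n, Γ i j k * u k = if i = j ∧ j ≠ 1 then -ε else 0 := by
  intro i j _ hin hj _
  by_cases hdeg : j = 1 ∨ i < j
  · rw [if_neg (by omega)]
    refine sum_eq_zero fun k hk => ?_
    rw [mem_Icc] at hk
    rw [christoffel_eq_zero h1 h3 (by omega), zero_mul]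
  · obtain ⟨t, rfl⟩ : ∃ t, i = j + t := ⟨i - j, by omega⟩
    rw [sum_christoffel_mul_eq_sum_range u (by omega) hin h1 h2 h3,
      sum_range_mul_christoffel ε u hu h4 h5]
    exact if_congr (by omega) rfl rfl
end

section
/- Let ∘ be a commutative associative product on a vector space (fiberwise, on tangent spaces) with structure constants c^i_{jk}, let E be invertible with inverse E^{-1}, and define the dual product by c*^i_{jk} = (E^{-1})^a c^i_{ab} c^b_{jk}. Then for any vector X and any symmetric tensor ∇E: the expression (c*^m_{jl} c*^l_{sk} − c*^m_{kl} c*^l_{sj}) X^s ∇_m E^i vanishes; consequently, if Γ* = Γ − c*·∇E, then (d_∇ − d_{∇*})(X∘) = 0 for every vector field X. -/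
/-!
Writing `A` for the matrix of `E⁻¹ ∘ ·` and `M_j` for that of `e_j ∘ ·`, the dual structure
constants are the entries of `A M_j`, so `c*` is the product `x * y = E⁻¹ ∘ x ∘ y`. All the
`M_j`, and hence `A`, commute by associativity, so `(A M_j)(A M_s) = (A A M_s) M_j`, and by
commutativity of `∘` the entry `(P M_j)^m_k` is symmetric in `j, k` for every matrix `P`. This
gives the first identity; the second is the same argument with `A M_j` times the matrix of
`X ∘ ·`, since `Γ − Γ*` is `c*·∇E`.
-/

open Matrix Finset

namespace StructureConstants

variable {ι R : Type*} [Fintype ι] [CommSemiring R] (c : ι → ι → ι → R)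

def structureMatrix (j : ι) : Matrix ι ι R := of fun i k => c i j k

def mulMatrix (v : ι → R) : Matrix ι ι R := ∑ j, v j • structureMatrix c j

def dualStructConst (Einv : ι → R) (i j k : ι) : R := ∑ a, ∑ b, Einv a * c i a b * c b j k

variable {c}

theorem mulMatrix_apply (v : ι → R) (i k : ι) : mulMatrix c v i k = ∑ j, v j * c i j k := by
  simp [mulMatrix, structureMatrix, Matrix.sum_apply]

theorem dualStructConst_eq_mul_apply (Einv : ι → R) (i j k : ι) :
    dualStructConst c Einv i j k = (mulMatrix c Einv * structureMatrix c j) i k := by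
  simp only [dualStructConst, mul_apply, mulMatrix_apply, structureMatrix, of_apply, sum_mul]
  exact sum_comm

theorem mul_structureMatrix_apply_comm (hcomm : ∀ i j k, c i j k = c i k j)
    (P : Matrix ι ι R) (j k m : ι) :
    (P * structureMatrix c j) m k = (P * structureMatrix c k) m j := by
  simp only [mul_apply, structureMatrix, of_apply, hcomm _ j k]

theorem mul_structureMatrix_mul_apply_comm (hcomm : ∀ i j k, c i j k = c i k j)
    {Q : Matrix ι ι R} (hQ : ∀ j, Commute (structureMatrix c j) Q)
    (P : Matrix ι ι R) (j k m : ι) :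
    (P * structureMatrix c j * Q) m k = (P * structureMatrix c k * Q) m j := by
  have hswap (j : ι) : P * structureMatrix c j * Q = P * Q * structureMatrix c j := by
    rw [Matrix.mul_assoc, (hQ j).eq, ← Matrix.mul_assoc]
  rw [hswap, hswap]
  exact mul_structureMatrix_apply_comm hcomm _ j k m

variable (hassoc : ∀ i j k m, (∑ l, c i j l * c l k m) = ∑ l, c i k l * c l j m)
include hassoc

theorem commute_structureMatrix (j k : ι) :
    Commute (structureMatrix c j) (structureMatrix c k) := by
  ext i m
  simpa only [mul_apply, structureMatrix, of_apply] using hassoc i j k m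

theorem commute_mulMatrix (v : ι → R) (j : ι) :
    Commute (structureMatrix c j) (mulMatrix c v) :=
  (Commute.sum_left _ _ _ fun k _ =>
    ((commute_structureMatrix hassoc k j).smul_left (v k))).symm

theorem sum_dualStructConst_mul_comm (hcomm : ∀ i j k, c i j k = c i k j)
    (Einv : ι → R) (m j s k : ι) :
    ∑ l, dualStructConst c Einv m j l * dualStructConst c Einv l s k
      = ∑ l, dualStructConst c Einv m k l * dualStructConst c Einv l s j := by
  have hQ (j : ι) : Commute (structureMatrix c j) (mulMatrix c Einv * structureMatrix c s) :=
    (commute_mulMatrix hassoc Einv j).mul_right (commute_structureMatrix hassoc j s)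
  simpa only [dualStructConst_eq_mul_apply, ← mul_apply, ← Matrix.mul_assoc]
    using mul_structureMatrix_mul_apply_comm hcomm hQ _ j k m

theorem sum_dualStructConst_contract_mul_comm (hcomm : ∀ i j k, c i j k = c i k j)
    (Einv w X : ι → R) (j k : ι) :
    ∑ l, (∑ m, dualStructConst c Einv m j l * w m) * (∑ s, c l s k * X s)
      = ∑ l, (∑ m, dualStructConst c Einv m k l * w m) * (∑ s, c l s j * X s) := by
  have hvec (j k : ι) : ∑ l, (∑ m, dualStructConst c Einv m j l * w m) * (∑ s, c l s k * X s)
      = vecMul w (mulMatrix c Einv * structureMatrix c j * mulMatrix c X) k := by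
    rw [← vecMul_vecMul]
    simp only [vecMul, dotProduct, mulMatrix_apply, dualStructConst_eq_mul_apply, mul_comm]
  rw [hvec, hvec]
  simp only [vecMul, dotProduct]
  exact sum_congr rfl fun m _ => congrArg _
    (mul_structureMatrix_mul_apply_comm hcomm (commute_mulMatrix hassoc X) _ j k m)

end StructureConstants

open StructureConstants

theorem statement7_general (n : ℕ)
    (c : Fin n → Fin n → Fin n → ℝ)
    (hcomm : ∀ i j k, c i j k = c i k j)
    (hassoc : ∀ i j k m, (∑ l, c i j l * c l k m) = ∑ l, c i k l * c l j m)
    (Einv : Fin n → ℝ)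
    (cstar : Fin n → Fin n → Fin n → ℝ)
    (hcstar : ∀ i j k, cstar i j k = ∑ a, ∑ b, Einv a * c i a b * c b j k)
    (N : Fin n → Fin n → ℝ)  -- `N m i` stands for `∇_m E^i`
    (Γ Γstar : Fin n → Fin n → Fin n → ℝ)
    (hΓstar : ∀ k i j, Γstar k i j = Γ k i j - ∑ s, cstar s i j * N s k)
    (X : Fin n → ℝ) :
    (∀ i j k, (∑ m, ∑ l, ∑ s,
        (cstar m j l * cstar l s k - cstar m k l * cstar l s j) * X s * N m i) = 0) ∧
    (∀ i j k,
      (∑ l, (Γ i j l - Γstar i j l) * (∑ s, c l s k * X s))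
        - (∑ l, (Γ i k l - Γstar i k l) * (∑ s, c l s j * X s)) = 0) := by
  obtain rfl : cstar = dualStructConst c Einv := funext₃ hcstar
  refine ⟨fun i j k => ?_, fun i j k => ?_⟩
  · refine sum_eq_zero fun m _ => ?_
    rw [sum_comm]
    refine sum_eq_zero fun s _ => ?_
    rw [← sum_mul, ← sum_mul, sum_sub_distrib,
      sum_dualStructConst_mul_comm hassoc hcomm, sub_self, zero_mul, zero_mul]
  · simp only [hΓstar, sub_sub_cancel]
    exact sub_eq_zero.2 (sum_dualStructConst_contract_mul_comm hassoc hcomm _ _ X j k)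

/-- Let `∘` be a commutative associative product with structure
constants `c`, `E` invertible with inverse `E⁻¹` (as multiplication operators), and let
the dual product be `c*^i_{jk} = (E⁻¹)^a c^i_{ab} c^b_{jk}`.  Then
`(c*^m_{jl} c*^l_{sk} − c*^m_{kl} c*^l_{sj}) X^s ∇_m E^i = 0`, and consequently with
`Γ* = Γ − c*·∇E` one has `(d_∇ − d_{∇*})(X ∘) = 0` for every vector `X`
(the derivative terms of `d_∇` and `d_{∇*}` coincide, so only the displayed algebraic
difference remains). -/
theorem statement7 (n : ℕ)
    (c : Fin n → Fin n → Fin n → ℝ)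
    (hcomm : ∀ i j k, c i j k = c i k j)
    (hassoc : ∀ i j k m, (∑ l, c i j l * c l k m) = ∑ l, c i k l * c l j m)
    (E Einv : Fin n → ℝ)
    (hInv : ∀ (X : Fin n → ℝ) (i : Fin n),
      (∑ a, ∑ b, Einv a * c i a b * (∑ p, ∑ q, c b p q * E p * X q)) = X i)
    (cstar : Fin n → Fin n → Fin n → ℝ)
    (hcstar : ∀ i j k, cstar i j k = ∑ a, ∑ b, Einv a * c i a b * c b j k)
    (N : Fin n → Fin n → ℝ)  -- `N m i` stands for `∇_m E^i`
    (Γ Γstar : Fin n → Fin n → Fin n → ℝ)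
    (hΓstar : ∀ k i j, Γstar k i j = Γ k i j - ∑ s, cstar s i j * N s k)
    (X : Fin n → ℝ) :
    (∀ i j k, (∑ m, ∑ l, ∑ s,
        (cstar m j l * cstar l s k - cstar m k l * cstar l s j) * X s * N m i) = 0) ∧
    (∀ i j k,
      (∑ l, (Γ i j l - Γstar i j l) * (∑ s, c l s k * X s))
        - (∑ l, (Γ i k l - Γstar i k l) * (∑ s, c l s j * X s)) = 0) :=
  statement7_general n c hcomm hassoc Einv cstar hcstar N Γ Γstar hΓstar X
end

section
/- Lemma 8.8 (vanishing identity A): let Γ^2_{2,2} = −mε/u^2, Γ^t_{1,1} (t ≥ 1) be any functions not depending on u^3,...,u^n, and define recursively Γ^n_{2,2} = Γ^{n-2}_{1,1} − Γ^2_{2,2}·u^n/u^2 − (1/u^2)·Σ_{l=1}^{n-3} (Γ^{l+2}_{2,2} − Γ^l_{1,1})·u^{n-l} for n ≥ 3. Then for every l ≥ 3 the quantity A^l := Γ^2_{2,2}·((u^3/u^2)·u^l − u^{l+1}) − Σ_{s=2}^{l-1} (Γ^{s+2}_{2,2} − Γ^s_{1,1})·u^{l-s+1} vanishes identically. -/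
/-!
Multiplied by `u 2`, the recursion for `D (n + 1)` says that the sum
`∑_{s=1}^{n-1} (D (s + 2) - F s) u (n - s + 1)`, whose top term `s = n - 1` is `(D (n + 1) - F (n - 1)) u 2`,
equals `-D 2 u (n + 1)`. The quantity `A^l` is this sum for `n = l` with its bottom term `s = 1` removed,
and the case `n = 2` gives that bottom term as `-D 2 u 3 u l / u 2`, which cancels against the rest.
-/

open Finset

lemma sum_Icc_sub_mul_eq_neg_of_recursion {K : Type*} [Field K] {u D F : ℕ → K} (hu : u 2 ≠ 0)
    (hrec : ∀ n : ℕ, 3 ≤ n →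
      D n = F (n - 2) - D 2 * u n / u 2
        - (1 / u 2) * ∑ l ∈ Icc 1 (n - 3), (D (l + 2) - F l) * u (n - l))
    {n : ℕ} (hn : 2 ≤ n) :
    ∑ s ∈ Icc 1 (n - 1), (D (s + 2) - F s) * u (n - s + 1) = -(D 2 * u (n + 1)) := by
  have h := hrec (n + 1) (by omega)
  rw [show n + 1 - 2 = n - 1 by omega, show n + 1 - 3 = n - 2 by omega] at h
  have hlow : ∑ s ∈ Icc 1 (n - 2), (D (s + 2) - F s) * u (n - s + 1)
      = ∑ s ∈ Icc 1 (n - 2), (D (s + 2) - F s) * u (n + 1 - s) :=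
    sum_congr rfl fun s hs => by rw [show n - s + 1 = n + 1 - s by simp at hs; omega]
  rw [show n - 1 = n - 2 + 1 by omega, sum_Icc_succ_top (by omega), hlow,
    show n - 2 + 1 + 2 = n + 1 by omega, show n - 2 + 1 = n - 1 by omega,
    show n - (n - 1) + 1 = 2 by omega]
  field_simp at h
  linear_combination h

theorem statement9_general (u : ℕ → ℝ) (hu : u 2 ≠ 0)
    (D F : ℕ → ℝ)
    (hrec : ∀ n : ℕ, 3 ≤ n →
      D n = F (n - 2) - D 2 * u n / u 2
        - (1 / u 2) * ∑ l ∈ Finset.Icc 1 (n - 3), (D (l + 2) - F l) * u (n - l)) :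
    ∀ l : ℕ, 3 ≤ l →
      D 2 * ((u 3 / u 2) * u l - u (l + 1))
        - (∑ s ∈ Finset.Icc 2 (l - 1), (D (s + 2) - F s) * u (l - s + 1)) = 0 := by
  intro l hl
  have hA := sum_Icc_sub_mul_eq_neg_of_recursion hu hrec (n := l) (by omega)
  have h3 : D 3 - F 1 = -(D 2 * u 3) / u 2 := by
    rw [eq_div_iff hu]
    simpa using sum_Icc_sub_mul_eq_neg_of_recursion hu hrec (n := 2) le_rfl
  rw [← add_sum_Ioc_eq_sum_Icc (by omega), ← Icc_add_one_left_eq_Ioc,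
    show l - 1 + 1 = l by omega, h3] at hA
  linear_combination -hA

/-- **Lemma 8.8, vanishing identity `A`.** With
`Γ^2_{2,2} = −mε/u²` (here `D 2`), arbitrary quantities `Γ^t_{1,1}` (here `F t`, which
do not involve the variables `u³,…`), and `D n` defined for `n ≥ 3` by the recursion
`D n = F (n−2) − D 2 · uⁿ/u² − (1/u²) Σ_{l=1}^{n−3} (D (l+2) − F l) u^{n−l}`,
the quantity `A^l = D 2 ((u³/u²) u^l − u^{l+1}) − Σ_{s=2}^{l−1}(D (s+2) − F s) u^{l−s+1}`
vanishes for every `l ≥ 3`. -/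
theorem statement9 (mα ε : ℝ) (u : ℕ → ℝ) (hu : u 2 ≠ 0)
    (D F : ℕ → ℝ)
    (hD2 : D 2 = -(mα * ε) / u 2)
    (hrec : ∀ n : ℕ, 3 ≤ n →
      D n = F (n - 2) - D 2 * u n / u 2
        - (1 / u 2) * ∑ l ∈ Finset.Icc 1 (n - 3), (D (l + 2) - F l) * u (n - l)) :
    ∀ l : ℕ, 3 ≤ l →
      D 2 * ((u 3 / u 2) * u l - u (l + 1))
        - (∑ s ∈ Finset.Icc 2 (l - 1), (D (s + 2) - F s) * u (l - s + 1)) = 0 :=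
  statement9_general u hu D F hrec
end

section
/- Lemma 8.10 (vanishing identity B): fix distinct constants a, b, c (playing the role of u^{1(α)}, u^{1(β)}, u^{1(ε)}) and constants p = m_β ε_β, q = m_ε ε_ε, and variables u^2, u^3, .... Define G_β^1 = p/(a−b), G_ε^1 = q/(a−c), and recursively G_β^{k+1} = −(1/(a−b))·Σ_{s=2}^{k+1} G_β^{k-s+2}·u^s, G_ε^{k+1} = −(1/(a−c))·Σ_{s=2}^{k+1} G_ε^{k-s+2}·u^s. Also set H_β = q/(b−c) and H_ε = p/(c−b). Then for every s ≥ 1: −Σ_{t=1}^{s+1} G_ε^{s-t+2}·G_β^{t} + G_β^{s+1}·H_β + G_ε^{s+1}·H_ε = 0. -/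
/-! With `U = Σ_{s ≥ 2} u_s X^{s-1}`, the recursions say exactly that the generating series
`g_β = Σ_k G_β^k X^{k-1}` and `g_ε = Σ_k G_ε^k X^{k-1}` satisfy `(a - b + U) g_β = p` and
`(a - c + U) g_ε = q`. Since the two factors differ by the constant `b - c`, partial fractions give
`g_β g_ε = q/(b-c) · g_β + p/(c-b) · g_ε`, and the identity is the coefficient of `X^s` of this. -/

open Finset PowerSeries

namespace PowerSeries

variable {R : Type*}

def mkSucc [Semiring R] (f : ℕ → R) : R⟦X⟧ := mk fun k => f (k + 1)

theorem coeff_mkSucc [Semiring R] (f : ℕ → R) (n : ℕ) : coeff n (mkSucc f) = f (n + 1) :=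
  coeff_mk _ _

theorem coeff_mkSucc_mul_mkSucc [CommSemiring R] (f g : ℕ → R) (n : ℕ) :
    coeff n (mkSucc f * mkSucc g) = ∑ t ∈ Icc 1 (n + 1), f (n + 2 - t) * g t := by
  rw [coeff_mul, ← Nat.sum_antidiagonal_swap, Nat.sum_antidiagonal_eq_sum_range_succ_mk,
    range_eq_Ico, ← Ico_add_one_right_eq_Icc, ← zero_add 1, ← sum_Ico_add']
  refine sum_congr rfl fun k hk => ?_
  rw [mem_Ico] at hk
  simp only [Prod.swap_prod_mk, coeff_mkSucc]
  congr 2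
  omega

theorem mkSucc_update_one_add [Ring R] (u : ℕ → R) (x y : R) :
    mkSucc (Function.update u 1 (x + y)) = mkSucc (Function.update u 1 x) + C y := by
  ext (_ | n) <;> simp [-coeff_zero_eq_constantCoeff, coeff_mkSucc, coeff_C]

section Field

variable {K : Type*} [Field K]

theorem mul_eq_partial_fractions {P g h : K⟦X⟧} {d p q : K}
    (hP : P ≠ 0) (hPd : P + C d ≠ 0) (hd : d ≠ 0) (hg : P * g = C p) (hh : (P + C d) * h = C q) :
    g * h = C (q / d) * g - C (p / d) * h := by
  have hq : C (q / d) * C d = C q := by rw [← map_mul, div_mul_cancel₀ q hd]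
  have hp : C (p / d) * C d = C p := by rw [← map_mul, div_mul_cancel₀ p hd]
  refine mul_left_cancel₀ (mul_ne_zero hP hPd) ?_
  linear_combination ((P + C d) * h - C (q / d) * (P + C d)) * hg + (C p + C (p / d) * P) * hh
    - C p * hq - P * (C (p / d) * hq - C (q / d) * hp)

theorem mkSucc_update_one_ne_zero (u : ℕ → K) {d : K} (hd : d ≠ 0) :
    mkSucc (Function.update u 1 d) ≠ 0 := fun h => hd <| by
  simpa [coeff_mkSucc] using congrArg (coeff 0) h

/-- `mkSucc (Function.update u 1 d)` is the series `d + U` with `U = Σ_{s ≥ 2} u s X^{s-1}`. -/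
theorem mkSucc_update_one_mul_eq_C (u G : ℕ → K) {d p : K} (hd : d ≠ 0) (h1 : G 1 = p / d)
    (hrec : ∀ k : ℕ, 1 ≤ k →
      G (k + 1) = -(1 / d) * ∑ s ∈ Icc 2 (k + 1), G (k + 2 - s) * u s) :
    mkSucc (Function.update u 1 d) * mkSucc G = C p := by
  ext n
  have hsplit : ∑ t ∈ Icc 1 (n + 1), G (n + 2 - t) * Function.update u 1 d t
      = G (n + 1) * d + ∑ t ∈ Icc 2 (n + 1), G (n + 2 - t) * u t := by
    rw [← add_sum_Ioc_eq_sum_Icc (by omega), ← Icc_add_one_left_eq_Ioc, Function.update_self]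
    refine congrArg _ (sum_congr rfl fun t ht => ?_)
    rw [Function.update_of_ne (by grind)]
  rw [mul_comm, coeff_mkSucc_mul_mkSucc, hsplit, coeff_C]
  rcases n with _ | k
  · simp [h1, hd]
  · rw [hrec (k + 1) le_add_self]
    field_simp
    simp

end Field

end PowerSeries

/-- **Lemma 8.10, vanishing identity `B`.** With distinct constants
`a, b, c` (the leading eigenvalues `u^{1(α)}, u^{1(β)}, u^{1(ε)}`), constants
`p = m_β ε_β`, `q = m_ε ε_ε`, and the recursively defined quantities
`G_β^k = Γ^{k(α)}_{1(β)1(α)}`, `G_ε^k = Γ^{k(α)}_{1(ε)1(α)}` with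
`H_β = q/(b−c) = Γ^{1(β)}_{1(ε)1(β)}`, `H_ε = p/(c−b) = Γ^{1(ε)}_{1(β)1(ε)}`, one has
`−Σ_{t=1}^{s+1} G_ε^{s−t+2} G_β^t + G_β^{s+1} H_β + G_ε^{s+1} H_ε = 0` for all `s ≥ 1`. -/
theorem statement10 (a b c p q : ℝ)
    (hab : a ≠ b) (hac : a ≠ c) (hbc : b ≠ c)
    (u : ℕ → ℝ) (Gβ Gε : ℕ → ℝ)
    (hGβ1 : Gβ 1 = p / (a - b))
    (hGε1 : Gε 1 = q / (a - c))
    (hGβrec : ∀ k : ℕ, 1 ≤ k →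
      Gβ (k + 1) = -(1 / (a - b)) * ∑ s ∈ Finset.Icc 2 (k + 1), Gβ (k + 2 - s) * u s)
    (hGεrec : ∀ k : ℕ, 1 ≤ k →
      Gε (k + 1) = -(1 / (a - c)) * ∑ s ∈ Finset.Icc 2 (k + 1), Gε (k + 2 - s) * u s) :
    ∀ s : ℕ, 1 ≤ s →
      -(∑ t ∈ Finset.Icc 1 (s + 1), Gε (s + 2 - t) * Gβ t)
        + Gβ (s + 1) * (q / (b - c)) + Gε (s + 1) * (p / (c - b)) = 0 := by
  intro s _
  have hab' := sub_ne_zero.mpr hab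
  have hac' := sub_ne_zero.mpr hac
  have hbc' := sub_ne_zero.mpr hbc
  have hβ := mkSucc_update_one_mul_eq_C u Gβ hab' hGβ1 hGβrec
  have hε := mkSucc_update_one_mul_eq_C u Gε hac' hGε1 hGεrec
  have hε0 := mkSucc_update_one_ne_zero u hac'
  rw [show a - c = a - b + (b - c) by ring, mkSucc_update_one_add] at hε hε0
  have hprod := congrArg (coeff s) <|
    mul_eq_partial_fractions (mkSucc_update_one_ne_zero u hab') hε0 hbc' hβ hε
  rw [mul_comm, coeff_mkSucc_mul_mkSucc, map_sub, coeff_C_mul, coeff_C_mul, coeff_mkSucc,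
    coeff_mkSucc] at hprod
  rw [hprod, ← neg_sub b c, div_neg]
  ring
end

section
/- Lemma 8.11 (vanishing identity C): fix distinct constants a, b (for u^{1(α)}, u^{1(β)}), constants p = m_β ε_β, M = m_α ε_α, and variables u^2, u^3, ... with u^2 ≠ 0. Define G^1 = p/(a−b), G^{k+1} = −(1/(a−b))·Σ_{s=2}^{k+1} G^{k-s+2}·u^s; define D^2 = −M/u^2 and D^{n} for n ≥ 3 by the single-block recursion D^n = F^{n-2} − D^2·u^n/u^2 − (1/u^2)·Σ_{l=1}^{n-3}(D^{l+2} − F^l)·u^{n-l}, where F^t := −G^t (the diagonal Christoffel symbols Γ^{t(α)}_{1(α)1(α)} in the two-block case). Then for every s ≥ 0: Σ_{l=2}^{s+1} (D^{s-l+4} − F^{s-l+2})·G^l + D^2·G^{s+2} + G^{s+1}·(M/(a−b)) = 0. -/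
/-!
Write `e` for the sequence `D^2, D^3 - F^1, D^4 - F^2, …` and `v n = u^{n+2}`. The
`D`-recursion says exactly that the Cauchy product `e * v` is the constant `D^2 u^2 = -M`, and
the `G`-recursion that `(a - b) (G^{k+2})_k = -(G^{k+1})_k * v`. Up to the `H`-term, the
identity is about the degree-`s` coefficient of `e * (G^{k+2})_k`; multiplied by `a - b` it
becomes, by associativity of the Cauchy product, that of `-(G^{k+1})_k * (e * v)`, namely
`M G^{s+1} = -(a - b) G^{s+1} H`.
-/

open Finset

open PowerSeries in
theorem mul_sum_antidiagonal_succ_eq_of_convolutions {R : Type*} [CommRing R]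
    (e g v : ℕ → R) (c : R)
    (he : ∀ m, 1 ≤ m → ∑ p ∈ antidiagonal m, e p.1 * v p.2 = 0)
    (hg : ∀ k, c * g (k + 1) = -∑ p ∈ antidiagonal k, g p.1 * v p.2) (s : ℕ) :
    c * ∑ p ∈ antidiagonal s, e p.1 * g (p.2 + 1) = -(e 0 * v 0 * g s) := by
  have hev : mk e * mk v = C (e 0 * v 0) := by
    ext (_ | m)
    · simp [coeff_mul]
    · rw [coeff_mul, coeff_C, if_neg m.succ_ne_zero]
      simpa using he (m + 1) m.succ_pos
  have hgv : c • mk (fun k => g (k + 1)) = -(mk g * mk v) := by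
    ext k
    simp [coeff_mul, hg]
  calc c * ∑ p ∈ antidiagonal s, e p.1 * g (p.2 + 1)
      = coeff s (mk e * c • mk fun k => g (k + 1)) := by
        simp [coeff_mul, mul_sum]
    _ = -coeff s (mk g * C (e 0 * v 0)) := by
        rw [hgv, ← hev, mul_neg, map_neg, mul_left_comm]
    _ = -(e 0 * v 0 * g s) := by rw [coeff_mul_C, coeff_mk, mul_comm]

def convolutionKernel (D F : ℕ → ℝ) : ℕ → ℝ
  | 0 => D 2
  | j + 1 => D (j + 3) - F (j + 1)

theorem convolutionKernel_zero (D F : ℕ → ℝ) : convolutionKernel D F 0 = D 2 := rfl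

theorem convolutionKernel_of_pos (D F : ℕ → ℝ) {j : ℕ} (hj : 1 ≤ j) :
    convolutionKernel D F j = D (j + 2) - F j := by
  obtain ⟨i, rfl⟩ := Nat.exists_eq_add_of_le' hj
  rfl

theorem sum_antidiagonal_eq_add_sum_Icc {M : Type*} [AddCommMonoid M] (f : ℕ → ℕ → M) (n : ℕ) :
    ∑ p ∈ antidiagonal n, f p.1 p.2 = f 0 n + ∑ j ∈ Icc 1 n, f j (n - j) := by
  rw [Nat.sum_antidiagonal_eq_sum_range_succ, sum_range_succ', add_comm, Nat.sub_zero,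
    ← Ico_add_one_right_eq_Icc, sum_Ico_eq_sum_range, Nat.add_sub_cancel]
  simp only [add_comm 1]

theorem sum_antidiagonal_convolutionKernel_mul_eq_zero (D F u : ℕ → ℝ) (hu : u 2 ≠ 0)
    (hDrec : ∀ n : ℕ, 3 ≤ n →
      D n = F (n - 2) - D 2 * u n / u 2
        - (1 / u 2) * ∑ l ∈ Finset.Icc 1 (n - 3), (D (l + 2) - F l) * u (n - l))
    {m : ℕ} (hm : 1 ≤ m) :
    ∑ p ∈ antidiagonal m, convolutionKernel D F p.1 * u (p.2 + 2) = 0 := by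
  obtain ⟨m, rfl⟩ := Nat.exists_eq_add_of_le' hm
  have hD := hDrec (m + 3) (by omega)
  simp only [Nat.add_sub_cancel, show m + 3 - 2 = m + 1 by omega] at hD
  have hsum : ∑ j ∈ Icc 1 m, convolutionKernel D F j * u (m + 1 - j + 2)
      = ∑ l ∈ Icc 1 m, (D (l + 2) - F l) * u (m + 3 - l) := by
    refine sum_congr rfl fun j hj => ?_
    obtain ⟨hj1, hjm⟩ := mem_Icc.1 hj
    rw [convolutionKernel_of_pos D F hj1, show m + 1 - j + 2 = m + 3 - j by omega]
  rw [sum_antidiagonal_eq_add_sum_Icc (fun i k => convolutionKernel D F i * u (k + 2)),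
    sum_Icc_succ_top (by omega), hsum, Nat.sub_self, convolutionKernel_zero,
    convolutionKernel_of_pos D F (j := m + 1) (by omega)]
  field_simp at hD
  linear_combination hD

theorem sub_mul_add_two_eq_neg_sum_antidiagonal (a b : ℝ) (hab : a ≠ b) (u G : ℕ → ℝ)
    (hGrec : ∀ k : ℕ, 1 ≤ k →
      G (k + 1) = -(1 / (a - b)) * ∑ s ∈ Finset.Icc 2 (k + 1), G (k + 2 - s) * u s) (k : ℕ) :
    (a - b) * G (k + 2) = -∑ p ∈ antidiagonal k, G (p.1 + 1) * u (p.2 + 2) := by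
  rw [hGrec (k + 1) (by omega), ← Nat.sum_antidiagonal_swap]
  simp only [Prod.fst_swap, Prod.snd_swap]
  rw [Nat.sum_antidiagonal_eq_sum_range_succ (fun i j => G (j + 1) * u (i + 2)),
    ← Ico_add_one_right_eq_Icc, sum_Ico_eq_sum_range, show k + 1 + 1 + 1 - 2 = k + 1 by omega]
  field_simp [sub_ne_zero.2 hab]
  congr 1
  refine sum_congr rfl fun j hj => ?_
  have hjk : j < k + 1 := mem_range.1 hj
  rw [show k + 1 + 2 - (2 + j) = k - j + 1 by omega, add_comm 2 j]

theorem sum_Icc_add_eq_sum_antidiagonal (D F G : ℕ → ℝ) (s : ℕ) :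
    (∑ l ∈ Icc 2 (s + 1), (D (s + 4 - l) - F (s + 2 - l)) * G l) + D 2 * G (s + 2)
      = ∑ p ∈ antidiagonal s, convolutionKernel D F p.1 * G (p.2 + 2) := by
  rw [← Nat.sum_antidiagonal_swap]
  simp only [Prod.fst_swap, Prod.snd_swap]
  rw [Nat.sum_antidiagonal_eq_sum_range_succ (fun i j => convolutionKernel D F j * G (i + 2)),
    sum_range_succ, ← Ico_add_one_right_eq_Icc, sum_Ico_eq_sum_range, Nat.sub_self,
    convolutionKernel_zero, show s + 1 + 1 - 2 = s by omega]
  congr 1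
  refine sum_congr rfl fun k hk => ?_
  have hks : k < s := mem_range.1 hk
  rw [convolutionKernel_of_pos D F (by omega), show s + 4 - (2 + k) = s - k + 2 by omega,
    show s + 2 - (2 + k) = s - k by omega, add_comm 2 k]

theorem statement11_general (a b M : ℝ) (hab : a ≠ b)
    (u : ℕ → ℝ) (hu : u 2 ≠ 0)
    (G F D : ℕ → ℝ) (H : ℝ)
    (hGrec : ∀ k : ℕ, 1 ≤ k →
      G (k + 1) = -(1 / (a - b)) * ∑ s ∈ Finset.Icc 2 (k + 1), G (k + 2 - s) * u s)
    (hD2 : D 2 = -M / u 2)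
    (hDrec : ∀ n : ℕ, 3 ≤ n →
      D n = F (n - 2) - D 2 * u n / u 2
        - (1 / u 2) * ∑ l ∈ Finset.Icc 1 (n - 3), (D (l + 2) - F l) * u (n - l))
    (hH : H = -M / (a - b)) :
    ∀ s : ℕ,
      (∑ l ∈ Finset.Icc 2 (s + 1), (D (s + 4 - l) - F (s + 2 - l)) * G l)
        + D 2 * G (s + 2) + G (s + 1) * H = 0 := by
  intro s
  have key := mul_sum_antidiagonal_succ_eq_of_convolutions (convolutionKernel D F)
    (fun i => G (i + 1)) (fun n => u (n + 2)) (a - b)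
    (fun _ hm => sum_antidiagonal_convolutionKernel_mul_eq_zero D F u hu hDrec hm)
    (sub_mul_add_two_eq_neg_sum_antidiagonal a b hab u G hGrec) s
  rw [convolutionKernel_zero, hD2, div_mul_cancel₀ _ hu] at key
  rw [sum_Icc_add_eq_sum_antidiagonal, hH]
  field_simp [sub_ne_zero.2 hab]
  linear_combination key

/-- **Lemma 8.11, vanishing identity `C`.** With distinct constants
`a, b` (the eigenvalues `u^{1(α)}, u^{1(β)}`), constants `p = m_β ε_β`, `M = m_α ε_α`,
the recursively defined `G^k = Γ^{k(α)}_{1(β)1(α)}`, `F^t = Γ^{t(α)}_{1(α)1(α)} = −G^t`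
(two-block case) and `D^n = Γ^{n(α)}_{2(α)2(α)}` given by the single-block recursion,
and `H = Γ^{1(β)}_{1(α)1(β)}` with the sign convention `H = −M/(a−b)`, one has
`Σ_{l=2}^{s+1} (D^{s−l+4} − F^{s−l+2}) G^l + D^2 G^{s+2} + G^{s+1} · H = 0`
for every `s ≥ 0` (the sum is empty for `s = 0`). -/
theorem statement11 (a b p M : ℝ) (hab : a ≠ b)
    (u : ℕ → ℝ) (hu : u 2 ≠ 0)
    (G F D : ℕ → ℝ) (H : ℝ)
    (hG1 : G 1 = p / (a - b))
    (hGrec : ∀ k : ℕ, 1 ≤ k →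
      G (k + 1) = -(1 / (a - b)) * ∑ s ∈ Finset.Icc 2 (k + 1), G (k + 2 - s) * u s)
    (hF : ∀ t : ℕ, F t = -G t)
    (hD2 : D 2 = -M / u 2)
    (hDrec : ∀ n : ℕ, 3 ≤ n →
      D n = F (n - 2) - D 2 * u n / u 2
        - (1 / u 2) * ∑ l ∈ Finset.Icc 1 (n - 3), (D (l + 2) - F l) * u (n - l))
    (hH : H = -M / (a - b)) :
    ∀ s : ℕ,
      (∑ l ∈ Finset.Icc 2 (s + 1), (D (s + 4 - l) - F (s + 2 - l)) * G l)
        + D 2 * G (s + 2) + G (s + 1) * H = 0 :=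
  statement11_general a b M hab u hu G F D H hGrec hD2 hDrec hH
end

section
/- Lemma 8.9: with the recursively defined functions Γ^{l+2}_{2,2} and Γ^l_{1,1} of the Lauricella connection for block α (where Γ^l_{1,1} = −Σ_{σ≠α} Γ^{l(α)}_{1(σ)1(α)} depends on the block eigenvalues u^{1(σ)} only through the differences u^{1(α)} − u^{1(σ)}, and Γ^{l+2}_{2,2} is defined by the recursion of Lemma 8.8), the combination Γ^{(l+2)}_{2,2} − Γ^{l}_{1,1} does not depend on u^{1(σ)} for any σ ≠ α, i.e. ∂(Γ^{(l+2)}_{2,2} − Γ^l_{1,1})/∂u^{1(σ)} = 0 for all l ∈ {1,...,m_α − 2}. -/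
/-!
Subtracting `Γ^{l}_{1,1}` from the recursion of Lemma 8.8 for `Γ^{l+2}_{2,2}` cancels its only
term involving `Γ_{1,1}` outside the sum, so the differences `Γ^{l+2}_{2,2} − Γ^{l}_{1,1}` satisfy a
recursion of their own whose coefficients are the inner coordinates `u^{s(α)}` alone, started from
`Γ^{2}_{2,2} = −m_α ε_α / u^{2(α)}`. By strong induction on `l` they are functions of the inner
coordinates only, hence constant in every eigenvalue `u^{1(σ)}`.
-/

/-- Partial derivative with respect to the leading eigenvalue coordinate `u^{1(σ)}` of
block `σ`, at the point `x = (eigenvalues, inner coordinates of block α)`. -/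
noncomputable def pdEigen {r : ℕ} (σ : Fin r)
    (f : (Fin r → ℝ) × (ℕ → ℝ) → ℝ) (x : (Fin r → ℝ) × (ℕ → ℝ)) : ℝ :=
  deriv (fun t => f (Function.update x.1 σ t, x.2)) (x.1 σ)

theorem pdEigen_eq_zero_of_snd_congr {r : ℕ} (σ : Fin r) (f : (Fin r → ℝ) × (ℕ → ℝ) → ℝ)
    (hf : ∀ x y : (Fin r → ℝ) × (ℕ → ℝ), x.2 = y.2 → f x = f y) (x : (Fin r → ℝ) × (ℕ → ℝ)) :
    pdEigen σ f x = 0 := by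
  have hconst : (fun t => f (Function.update x.1 σ t, x.2)) = fun _ => f x :=
    funext fun t => hf _ x rfl
  rw [pdEigen, hconst, deriv_const]

section DiffRecursion

variable {X : Type*} (D GA : ℕ → X × (ℕ → ℝ) → ℝ)
  (hDrec : ∀ n : ℕ, 3 ≤ n → ∀ x : X × (ℕ → ℝ),
    D n x = GA (n - 2) x - D 2 x * x.2 n / x.2 2
      - (1 / x.2 2) * ∑ l ∈ Finset.Icc 1 (n - 3), (D (l + 2) x - GA l x) * x.2 (n - l))
include hDrec

theorem sub_eq_diff_recursion {l : ℕ} (hl : 1 ≤ l) (x : X × (ℕ → ℝ)) :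
    D (l + 2) x - GA l x
      = -(D 2 x * x.2 (l + 2) / x.2 2)
        - (1 / x.2 2) * ∑ j ∈ Finset.Icc 1 (l - 1), (D (j + 2) x - GA j x) * x.2 (l + 2 - j) := by
  have h := hDrec (l + 2) (by omega) x
  rw [show l + 2 - 2 = l by omega, show l + 2 - 3 = l - 1 by omega] at h
  rw [h]
  ring

theorem sub_congr_of_snd_eq (hD2 : ∀ x y : X × (ℕ → ℝ), x.2 = y.2 → D 2 x = D 2 y)
    {l : ℕ} (hl : 1 ≤ l) {x y : X × (ℕ → ℝ)} (hxy : x.2 = y.2) :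
    D (l + 2) x - GA l x = D (l + 2) y - GA l y := by
  induction l using Nat.strong_induction_on with
  | _ l ih =>
    rw [sub_eq_diff_recursion D GA hDrec hl, sub_eq_diff_recursion D GA hDrec hl, hD2 x y hxy, hxy]
    congr 2
    refine Finset.sum_congr rfl fun j hj => ?_
    rw [Finset.mem_Icc] at hj
    rw [ih j (by omega) hj.1]

end DiffRecursion

/-- `GA k = Γ^{k(α)}_{1(α)1(α)}` and `D n = Γ^{n(α)}_{2(α)2(α)}`. -/
theorem statement12_general (r : ℕ) (α : Fin r) (m : Fin r → ℕ) (ε : Fin r → ℝ)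
    (GA : ℕ → ((Fin r → ℝ) × (ℕ → ℝ)) → ℝ)
    (D : ℕ → ((Fin r → ℝ) × (ℕ → ℝ)) → ℝ)
    (hD2 : ∀ x, D 2 x = -((m α : ℝ) * ε α) / x.2 2)
    (hDrec : ∀ n : ℕ, 3 ≤ n → ∀ x,
      D n x = GA (n - 2) x - D 2 x * x.2 n / x.2 2
        - (1 / x.2 2) * ∑ l ∈ Finset.Icc 1 (n - 3), (D (l + 2) x - GA l x) * x.2 (n - l)) :
    ∀ σ, σ ≠ α → ∀ l : ℕ, 1 ≤ l → l ≤ m α - 2 →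
      ∀ x : (Fin r → ℝ) × (ℕ → ℝ), x.2 2 ≠ 0 → (∀ τ, τ ≠ α → x.1 α ≠ x.1 τ) →
        pdEigen σ (fun y => D (l + 2) y - GA l y) x = 0 := by
  intro σ _ l hl _ x _ _
  have hD2_congr : ∀ x y : (Fin r → ℝ) × (ℕ → ℝ), x.2 = y.2 → D 2 x = D 2 y := by
    intro x y hxy
    rw [hD2, hD2, hxy]
  exact pdEigen_eq_zero_of_snd_congr σ _
    (fun x y hxy => sub_congr_of_snd_eq D GA hDrec hD2_congr hl hxy) x

/-- **Lemma 8.9.** For the recursively defined Christoffel symbols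
`G σ k = Γ^{k(α)}_{1(σ)1(α)}` (σ ≠ α), `GA k = Γ^{k(α)}_{1(α)1(α)} = −Σ_{σ≠α} G σ k`,
and `D n = Γ^{n(α)}_{2(α)2(α)}` given by the recursion of Lemma 8.8, the combination
`Γ^{(l+2)(α)}_{2(α)2(α)} − Γ^{l(α)}_{1(α)1(α)}` does not depend on `u^{1(σ)}` for any
`σ ≠ α`, for all `l ∈ {1,…,m_α − 2}`. -/
theorem statement12 (r : ℕ) (α : Fin r) (m : Fin r → ℕ) (ε : Fin r → ℝ)
    (G : Fin r → ℕ → ((Fin r → ℝ) × (ℕ → ℝ)) → ℝ)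
    (hG1 : ∀ σ, σ ≠ α → ∀ x, G σ 1 x = (m σ : ℝ) * ε σ / (x.1 α - x.1 σ))
    (hGrec : ∀ σ, σ ≠ α → ∀ k : ℕ, 1 ≤ k → ∀ x,
      G σ (k + 1) x
        = -(1 / (x.1 α - x.1 σ)) * ∑ s ∈ Finset.Icc 2 (k + 1), G σ (k + 2 - s) x * x.2 s)
    (GA : ℕ → ((Fin r → ℝ) × (ℕ → ℝ)) → ℝ)
    (hGA : ∀ k x, GA k x = -∑ σ ∈ Finset.univ.erase α, G σ k x)
    (D : ℕ → ((Fin r → ℝ) × (ℕ → ℝ)) → ℝ)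
    (hD2 : ∀ x, D 2 x = -((m α : ℝ) * ε α) / x.2 2)
    (hDrec : ∀ n : ℕ, 3 ≤ n → ∀ x,
      D n x = GA (n - 2) x - D 2 x * x.2 n / x.2 2
        - (1 / x.2 2) * ∑ l ∈ Finset.Icc 1 (n - 3), (D (l + 2) x - GA l x) * x.2 (n - l)) :
    ∀ σ, σ ≠ α → ∀ l : ℕ, 1 ≤ l → l ≤ m α - 2 →
      ∀ x : (Fin r → ℝ) × (ℕ → ℝ), x.2 2 ≠ 0 → (∀ τ, τ ≠ α → x.1 α ≠ x.1 τ) →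
        pdEigen σ (fun y => D (l + 2) y - GA l y) x = 0 :=
  statement12_general r α m ε GA D hD2 hDrec
end

section
/- In the multi-block Lauricella setting, if the Christoffel symbols satisfy the compatibility conditions δ_{βγ}Γ^{l(δ)}_{i(α)(j+k-1)(β)} − δ^δ_β Γ^{(l-j+1)(β)}_{i(α)k(γ)} − δ_{αγ}Γ^{l(δ)}_{j(β)(i+k-1)(α)} + δ^δ_α Γ^{(l-i+1)(α)}_{j(β)k(γ)} = 0 for all block labels and indices, then in particular: (i) Γ^{l(β)}_{i(α)(j+k)(α)} = Γ^{l(β)}_{(i+k)(α)j(α)} for α ≠ β; (ii) Γ^{k(β)}_{i(α)j(β)} = Γ^{l(β)}_{i(α)m(β)} whenever k−j = l−m and α ≠ β; (iii) Γ^{k(γ)}_{i(α)j(β)} = 0 whenever α, β, γ are pairwise distinct. -/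
/-!
Each claim is a single instance of the compatibility condition, chosen so that the
Kronecker deltas kill two of its four terms; for (ii) the instance with `k = 1` shows that
`Γ^{b(β)}_{i(α)a(β)}` depends on `b - a` only.
-/

/-- `Γ δ l α i β j` stands for `Γ^{l(δ)}_{i(α)j(β)}`. -/
def ChristoffelCompatible {r : ℕ} (m : Fin r → ℕ)
    (Γ : Fin r → ℤ → Fin r → ℤ → Fin r → ℤ → ℝ) : Prop :=
  ∀ (α β γ δ : Fin r) (i j k l : ℤ),
    1 ≤ i → i ≤ (m α : ℤ) → 1 ≤ j → j ≤ (m β : ℤ) → 1 ≤ k → k ≤ (m γ : ℤ) →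
    1 ≤ l → l ≤ (m δ : ℤ) →
    (if β = γ then (1 : ℝ) else 0) * Γ δ l α i β (j + k - 1)
      - (if δ = β then (1 : ℝ) else 0) * Γ β (l - j + 1) α i γ k
      - (if α = γ then (1 : ℝ) else 0) * Γ δ l β j α (i + k - 1)
      + (if δ = α then (1 : ℝ) else 0) * Γ α (l - i + 1) β j γ k = 0

namespace ChristoffelCompatible

variable {r : ℕ} {m : Fin r → ℕ} {Γ : Fin r → ℤ → Fin r → ℤ → Fin r → ℤ → ℝ}

theorem shift_comm (hcomp : ChristoffelCompatible m Γ)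
    (hsym : ∀ δ l α i β j, Γ δ l α i β j = Γ δ l β j α i)
    {α β : Fin r} (hαβ : α ≠ β) {i j k l : ℤ} (hi : 1 ≤ i) (hj : 1 ≤ j) (hk : 1 ≤ k)
    (hik : i + k ≤ m α) (hjk : j + k ≤ m α) (hl : 1 ≤ l) (hlβ : l ≤ m β) :
    Γ β l α i α (j + k) = Γ β l α (i + k) α j := by
  have h := hcomp α α α β i j (k + 1) l hi (by omega) hj (by omega) (by omega) (by omega) hl hlβ
  simp only [if_true, if_neg hαβ.symm, one_mul, zero_mul, sub_zero, add_zero,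
    show j + (k + 1) - 1 = j + k by ring, show i + (k + 1) - 1 = i + k by ring] at h
  rw [hsym β l α j α (i + k)] at h
  linarith

theorem eq_at_lower_one (hcomp : ChristoffelCompatible m Γ) {α β : Fin r} (hαβ : α ≠ β)
    {i a b : ℤ} (hi : 1 ≤ i) (hiα : i ≤ m α) (ha : 1 ≤ a) (haβ : a ≤ m β)
    (hb : 1 ≤ b) (hbβ : b ≤ m β) :
    Γ β b α i β a = Γ β (b - a + 1) α i β 1 := by
  have h := hcomp α β β β i a 1 b hi hiα ha haβ le_rfl (by omega) hb hbβ
  simp only [if_true, if_neg hαβ, if_neg hαβ.symm, one_mul, zero_mul, sub_zero, add_zero,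
    add_sub_cancel_right] at h
  linarith

theorem eq_of_sub_eq (hcomp : ChristoffelCompatible m Γ) {α β : Fin r} (hαβ : α ≠ β)
    {i j k l n : ℤ} (hi : 1 ≤ i) (hiα : i ≤ m α) (hj : 1 ≤ j) (hjβ : j ≤ m β)
    (hk : 1 ≤ k) (hkβ : k ≤ m β) (hl : 1 ≤ l) (hlβ : l ≤ m β) (hn : 1 ≤ n) (hnβ : n ≤ m β)
    (hkl : k - j = l - n) :
    Γ β k α i β j = Γ β l α i β n := by
  rw [hcomp.eq_at_lower_one hαβ hi hiα hj hjβ hk hkβ, hcomp.eq_at_lower_one hαβ hi hiα hn hnβ hl hlβ,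
    hkl]

theorem eq_zero_of_pairwise_ne (hcomp : ChristoffelCompatible m Γ) {α β γ : Fin r}
    (hαβ : α ≠ β) (hβγ : β ≠ γ) (hαγ : α ≠ γ) {i j k : ℤ} (hi : 1 ≤ i) (hiα : i ≤ m α)
    (hj : 1 ≤ j) (hjβ : j ≤ m β) (hk : 1 ≤ k) (hkγ : k ≤ m γ) :
    Γ γ k α i β j = 0 := by
  have h := hcomp α γ β γ i 1 j k hi hiα le_rfl (by omega) hj hjβ hk hkγ
  simpa [hβγ.symm, hαβ, hαγ.symm] using h

end ChristoffelCompatible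

theorem statement19_general (r : ℕ) (m : Fin r → ℕ)
    (Γ : Fin r → ℤ → Fin r → ℤ → Fin r → ℤ → ℝ)
    (hsym : ∀ (δ : Fin r) (l : ℤ) (α : Fin r) (i : ℤ) (β : Fin r) (j : ℤ),
      Γ δ l α i β j = Γ δ l β j α i)
    (hcomp : ∀ (α β γ δ : Fin r) (i j k l : ℤ),
      1 ≤ i → i ≤ (m α : ℤ) → 1 ≤ j → j ≤ (m β : ℤ) → 1 ≤ k → k ≤ (m γ : ℤ) →
      1 ≤ l → l ≤ (m δ : ℤ) →
      (if β = γ then (1 : ℝ) else 0) * Γ δ l α i β (j + k - 1)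
        - (if δ = β then (1 : ℝ) else 0) * Γ β (l - j + 1) α i γ k
        - (if α = γ then (1 : ℝ) else 0) * Γ δ l β j α (i + k - 1)
        + (if δ = α then (1 : ℝ) else 0) * Γ α (l - i + 1) β j γ k = 0) :
    -- (i)
    (∀ (α β : Fin r), α ≠ β → ∀ i j k l : ℤ,
      1 ≤ i → 1 ≤ j → 1 ≤ k → i + k ≤ (m α : ℤ) → j + k ≤ (m α : ℤ) →
      1 ≤ l → l ≤ (m β : ℤ) →
      Γ β l α i α (j + k) = Γ β l α (i + k) α j) ∧
    -- (ii)
    (∀ (α β : Fin r), α ≠ β → ∀ i j k l mm : ℤ,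
      1 ≤ i → i ≤ (m α : ℤ) → 1 ≤ j → j ≤ (m β : ℤ) → 1 ≤ k → k ≤ (m β : ℤ) →
      1 ≤ l → l ≤ (m β : ℤ) → 1 ≤ mm → mm ≤ (m β : ℤ) → k - j = l - mm →
      Γ β k α i β j = Γ β l α i β mm) ∧
    -- (vi)
    (∀ (α β γ : Fin r), α ≠ β → β ≠ γ → α ≠ γ → ∀ i j k : ℤ,
      1 ≤ i → i ≤ (m α : ℤ) → 1 ≤ j → j ≤ (m β : ℤ) → 1 ≤ k → k ≤ (m γ : ℤ) →
      Γ γ k α i β j = 0) := by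
  have hΓ : ChristoffelCompatible m Γ := hcomp
  exact ⟨fun _ _ hαβ _ _ _ _ => hΓ.shift_comm hsym hαβ,
    fun _ _ hαβ _ _ _ _ _ => hΓ.eq_of_sub_eq hαβ,
    fun _ _ _ hαβ hβγ hαγ _ _ _ => hΓ.eq_zero_of_pairwise_ne hαβ hβγ hαγ⟩

/-- **Proposition 8.2 (i),(ii),(vi).** In the multi-block Lauricella
setting (coordinates labelled `i(α)`, `α ∈ Fin r`, positional indices written as
integers, with the convention that a Christoffel symbol with an out-of-range index is
zero), if the torsionless Christoffel symbols `Γ^{l(δ)}_{i(α)j(β)}` (written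
`Γ δ l α i β j`) satisfy the compatibility conditions
`δ_{βγ}Γ^{l(δ)}_{i(α)(j+k-1)(β)} − δ^δ_β Γ^{(l-j+1)(β)}_{i(α)k(γ)}
 − δ_{αγ}Γ^{l(δ)}_{j(β)(i+k-1)(α)} + δ^δ_α Γ^{(l-i+1)(α)}_{j(β)k(γ)} = 0`,
then (i), (ii) and (vi) of Proposition 8.2 hold. -/
theorem statement19 (r : ℕ) (m : Fin r → ℕ)
    (Γ : Fin r → ℤ → Fin r → ℤ → Fin r → ℤ → ℝ)
    (hrange : ∀ (δ : Fin r) (l : ℤ) (α : Fin r) (i : ℤ) (β : Fin r) (j : ℤ),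
      (l < 1 ∨ (m δ : ℤ) < l ∨ i < 1 ∨ (m α : ℤ) < i ∨ j < 1 ∨ (m β : ℤ) < j) →
      Γ δ l α i β j = 0)
    (hsym : ∀ (δ : Fin r) (l : ℤ) (α : Fin r) (i : ℤ) (β : Fin r) (j : ℤ),
      Γ δ l α i β j = Γ δ l β j α i)
    (hcomp : ∀ (α β γ δ : Fin r) (i j k l : ℤ),
      1 ≤ i → i ≤ (m α : ℤ) → 1 ≤ j → j ≤ (m β : ℤ) → 1 ≤ k → k ≤ (m γ : ℤ) →
      1 ≤ l → l ≤ (m δ : ℤ) →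
      (if β = γ then (1 : ℝ) else 0) * Γ δ l α i β (j + k - 1)
        - (if δ = β then (1 : ℝ) else 0) * Γ β (l - j + 1) α i γ k
        - (if α = γ then (1 : ℝ) else 0) * Γ δ l β j α (i + k - 1)
        + (if δ = α then (1 : ℝ) else 0) * Γ α (l - i + 1) β j γ k = 0) :
    -- (i)
    (∀ (α β : Fin r), α ≠ β → ∀ i j k l : ℤ,
      1 ≤ i → 1 ≤ j → 1 ≤ k → i + k ≤ (m α : ℤ) → j + k ≤ (m α : ℤ) →
      1 ≤ l → l ≤ (m β : ℤ) →
      Γ β l α i α (j + k) = Γ β l α (i + k) α j) ∧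
    -- (ii)
    (∀ (α β : Fin r), α ≠ β → ∀ i j k l mm : ℤ,
      1 ≤ i → i ≤ (m α : ℤ) → 1 ≤ j → j ≤ (m β : ℤ) → 1 ≤ k → k ≤ (m β : ℤ) →
      1 ≤ l → l ≤ (m β : ℤ) → 1 ≤ mm → mm ≤ (m β : ℤ) → k - j = l - mm →
      Γ β k α i β j = Γ β l α i β mm) ∧
    -- (vi)
    (∀ (α β γ : Fin r), α ≠ β → β ≠ γ → α ≠ γ → ∀ i j k : ℤ,
      1 ≤ i → i ≤ (m α : ℤ) → 1 ≤ j → j ≤ (m β : ℤ) → 1 ≤ k → k ≤ (m γ : ℤ) →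
      Γ γ k α i β j = 0) :=
  statement19_general r m Γ hsym hcomp
end
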